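/- arXiv:2002.11787 — 2 statements merged into one kernel-verified Lean document; each statement's English description precedes it below -/
import Mathlib

section
/- Let ρ ∈ (-1/3, 0), u = ρ + √(ρ² - ρ), v = ρ - √(ρ² - ρ). Then for every natural number n, |(u^{n+1} - v^{n+1})/(u - v)| ≤ |v|ⁿ. -/
/-! The quotients `aₙ = (uⁿ⁺¹ - vⁿ⁺¹)/(u - v)` satisfy `aₙ₊₂ = (u + v) aₙ₊₁ - uv aₙ`, and `|v|` is
a root of the majorant equation `w² = |u + v| w + |uv|` (here `v² = 2ρv - ρ` with `ρ, v < 0`).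
Bounding the recurrence termwise by the triangle inequality then gives `|aₙ| ≤ |v|ⁿ` by induction. -/

theorem abs_le_pow_of_linear_recurrence {a : ℕ → ℝ} {p q w : ℝ}
    (hrec : ∀ n, a (n + 2) = p * a (n + 1) + q * a n) (hw : w ^ 2 = |p| * w + |q|)
    (h0 : |a 0| ≤ 1) (h1 : |a 1| ≤ w) (n : ℕ) : |a n| ≤ w ^ n := by
  suffices ∀ n, |a n| ≤ w ^ n ∧ |a (n + 1)| ≤ w ^ (n + 1) from (this n).1
  intro n
  induction n with
  | zero => simpa using ⟨h0, h1⟩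
  | succ n ih =>
    refine ⟨ih.2, ?_⟩
    calc |a (n + 2)| ≤ |p| * |a (n + 1)| + |q| * |a n| := by
          rw [hrec, ← abs_mul, ← abs_mul]; exact abs_add_le _ _
      _ ≤ |p| * w ^ (n + 1) + |q| * w ^ n := by gcongr; exacts [ih.2, ih.1]
      _ = w ^ (n + 2) := by rw [pow_add w n 2, hw]; ring

theorem pow_sub_pow_div_sub_add_three {K : Type*} [Field K] (u v : K) (n : ℕ) :
    (u ^ (n + 3) - v ^ (n + 3)) / (u - v) =
      (u + v) * ((u ^ (n + 2) - v ^ (n + 2)) / (u - v)) +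
        -(u * v) * ((u ^ (n + 1) - v ^ (n + 1)) / (u - v)) := by
  rw [mul_div_assoc', mul_div_assoc', ← add_div]
  congr 1
  ring

theorem abs_pow_sub_pow_div_sub_le {u v : ℝ} (huv : u ≠ v) (hsum : |u + v| ≤ |v|)
    (hsq : |v| ^ 2 = |u + v| * |v| + |u * v|) (n : ℕ) :
    |(u ^ (n + 1) - v ^ (n + 1)) / (u - v)| ≤ |v| ^ n := by
  have hne : u - v ≠ 0 := sub_ne_zero.mpr huv
  refine abs_le_pow_of_linear_recurrence (a := fun n ↦ (u ^ (n + 1) - v ^ (n + 1)) / (u - v))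
    (p := u + v) (q := -(u * v)) (pow_sub_pow_div_sub_add_three u v) (by rwa [abs_neg]) ?_ ?_ n
  · simp [hne]
  · have h1 : (u ^ 2 - v ^ 2) / (u - v) = u + v := by field_simp; ring
    simpa [h1] using hsum

theorem stmt_2 (ρ : ℝ) (hρ : ρ ∈ Set.Ioo (-(1/3) : ℝ) 0)
    (u v : ℝ)
    (hu : u = ρ + Real.sqrt (ρ ^ 2 - ρ))
    (hv : v = ρ - Real.sqrt (ρ ^ 2 - ρ)) :
    ∀ n : ℕ, |(u ^ (n + 1) - v ^ (n + 1)) / (u - v)| ≤ |v| ^ n := by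
  have hρ₀ : ρ < 0 := hρ.2
  set s := √(ρ ^ 2 - ρ)
  have hs : s ^ 2 = ρ ^ 2 - ρ := Real.sq_sqrt (by nlinarith)
  have hρs : -ρ < s := by nlinarith [Real.sqrt_nonneg (ρ ^ 2 - ρ)]
  have hv₀ : v < 0 := by rw [hv]; linarith
  have hsum : u + v = 2 * ρ := by rw [hu, hv]; ring
  have hprod : u * v = ρ := by rw [hu, hv]; linear_combination -hs
  have huv : u ≠ v := by rw [hu, hv]; intro h; linarith
  intro n
  refine abs_pow_sub_pow_div_sub_le huv ?_ ?_ n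
  · rw [hsum, abs_of_neg hv₀, abs_of_neg (by linarith), hv]
    linarith
  · rw [hsum, hprod, abs_of_neg hv₀, abs_of_neg (by linarith : 2 * ρ < 0), abs_of_neg hρ₀, hv]
    linear_combination hs
end

section
/- Let λ ∈ [0, 1) and define C₁ = 3/(1-λ)², C₂ = 3λ²/((1-√λ)²(1-λ)), C₃ = 3/((1-√λ)²(1-λ)), φ = arccos(√λ). Suppose nonnegative sequences (yₖ), (βₖ), (rₖ) satisfy for all k ≥ 0: y_{k+1}² sin²φ ≤ 3 y₁² λᵏ + 3λ²(Σ_{s=1}^{k} β_s λ^{(k-s)/2})² + 3(Σ_{s=1}^{k} r_s λ^{(k-s)/2})². Then Σ_{k=1}^{K} yₖ² ≤ C₁ y₁² + C₂ Σ_{k=1}^{K-1} βₖ² + C₃ Σ_{k=1}^{K-1} rₖ². -/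
open Finset

private lemma aux_geom (q : ℝ) (h0 : 0 ≤ q) (h1 : q < 1) (n : ℕ) :
    ∑ i ∈ Finset.range n, q ^ i ≤ 1 / (1 - q) := by
  have h : (0:ℝ) < 1 - q := by linarith
  have e : ∑ i ∈ Finset.range n, q ^ i = (1 - q ^ n) / (1 - q) := by
    rw [geom_sum_eq h1.ne]
    rw [div_eq_div_iff (by linarith) (by linarith)]
    ring
  rw [e]
  gcongr
  nlinarith [pow_nonneg h0 n]

private lemma aux_geomIcc (q : ℝ) (h0 : 0 ≤ q) (h1 : q < 1) (a b : ℕ) :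
    ∑ j ∈ Finset.Icc a b, q ^ (j - a) ≤ 1 / (1 - q) := by
  rw [← Finset.Ico_add_one_right_eq_Icc, Finset.sum_Ico_eq_sum_range]
  have e : ∀ i ∈ Finset.range (b + 1 - a), q ^ (a + i - a) = q ^ i := by
    intro i _; congr 1; omega
  rw [Finset.sum_congr rfl e]
  exact aux_geom q h0 h1 _

private lemma aux_geomIcc' (q : ℝ) (h0 : 0 ≤ q) (h1 : q < 1) (j : ℕ) :
    ∑ s ∈ Finset.Icc 1 j, q ^ (j - s) ≤ 1 / (1 - q) := by
  rw [← Finset.Ico_add_one_right_eq_Icc, Finset.sum_Ico_eq_sum_range]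
  have e : ∀ i ∈ Finset.range (j + 1 - 1), q ^ (j - (1 + i)) = q ^ (j - 1 - i) := by
    intro i _; congr 1; omega
  rw [Finset.sum_congr rfl e]
  have e2 : j + 1 - 1 = j := by omega
  rw [e2, Finset.sum_range_reflect]
  exact aux_geom q h0 h1 _

private lemma aux_alg (l q a b c : ℝ) (h1l : (1:ℝ) - l ≠ 0) (h1q : (1:ℝ) - q ≠ 0) :
    (3 * a * (l * (1 / (1 - l))) + 3 * l ^ 2 * ((1 / (1 - q)) ^ 2 * b)
        + 3 * ((1 / (1 - q)) ^ 2 * c)) / (1 - l)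
      = 3 * l / (1 - l) ^ 2 * a + 3 * l ^ 2 / ((1 - q) ^ 2 * (1 - l)) * b
        + 3 / ((1 - q) ^ 2 * (1 - l)) * c := by
  field_simp

private lemma aux_conv (q : ℝ) (h0 : 0 ≤ q) (h1 : q < 1) (a : ℕ → ℝ) (N : ℕ) :
    ∑ j ∈ Finset.Icc 1 N, (∑ s ∈ Finset.Icc 1 j, a s * q ^ (j - s)) ^ 2
      ≤ (1 / (1 - q)) ^ 2 * ∑ s ∈ Finset.Icc 1 N, a s ^ 2 := by
  have hq : (0:ℝ) < 1 - q := by linarith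
  have hc : (0:ℝ) ≤ 1 / (1 - q) := by positivity
  have step : ∀ j : ℕ, (∑ s ∈ Finset.Icc 1 j, a s * q ^ (j - s)) ^ 2
      ≤ (1 / (1 - q)) * ∑ s ∈ Finset.Icc 1 j, a s ^ 2 * q ^ (j - s) := by
    intro j
    have cs := Finset.sum_sq_le_sum_mul_sum_of_sq_eq_mul (Finset.Icc 1 j)
      (r := fun s => a s * q ^ (j - s)) (f := fun s => q ^ (j - s))
      (g := fun s => a s ^ 2 * q ^ (j - s))
      (fun i _ => pow_nonneg h0 _)
      (fun i _ => mul_nonneg (sq_nonneg _) (pow_nonneg h0 _))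
      (fun i _ => by ring)
    refine cs.trans ?_
    exact mul_le_mul_of_nonneg_right (aux_geomIcc' q h0 h1 j)
      (Finset.sum_nonneg fun i _ => mul_nonneg (sq_nonneg _) (pow_nonneg h0 _))
  calc ∑ j ∈ Finset.Icc 1 N, (∑ s ∈ Finset.Icc 1 j, a s * q ^ (j - s)) ^ 2
      ≤ ∑ j ∈ Finset.Icc 1 N, (1 / (1 - q)) * ∑ s ∈ Finset.Icc 1 j, a s ^ 2 * q ^ (j - s) :=
        Finset.sum_le_sum fun j _ => step j
    _ = (1 / (1 - q)) * ∑ s ∈ Finset.Icc 1 N, ∑ j ∈ Finset.Icc s N, a s ^ 2 * q ^ (j - s) := by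
        rw [← Finset.mul_sum]
        congr 1
        exact Finset.sum_comm' (by intro x y; simp only [Finset.mem_Icc]; omega)
    _ ≤ (1 / (1 - q)) * ∑ s ∈ Finset.Icc 1 N, a s ^ 2 * (1 / (1 - q)) := by
        refine mul_le_mul_of_nonneg_left (Finset.sum_le_sum fun s _ => ?_) hc
        rw [← Finset.mul_sum]
        exact mul_le_mul_of_nonneg_left (aux_geomIcc q h0 h1 s N) (sq_nonneg _)
    _ = (1 / (1 - q)) ^ 2 * ∑ s ∈ Finset.Icc 1 N, a s ^ 2 := by
        rw [← Finset.sum_mul]; ring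

set_option maxHeartbeats 1000000 in
theorem stmt_18 (l : ℝ) (hl : 0 ≤ l) (hl1 : l < 1)
    (C₁ C₂ C₃ φ : ℝ)
    (hC₁ : C₁ = 3 / (1 - l) ^ 2)
    (hC₂ : C₂ = 3 * l ^ 2 / ((1 - Real.sqrt l) ^ 2 * (1 - l)))
    (hC₃ : C₃ = 3 / ((1 - Real.sqrt l) ^ 2 * (1 - l)))
    (hφ : φ = Real.arccos (Real.sqrt l))
    (y β r : ℕ → ℝ)
    (hy : ∀ k, 0 ≤ y k) (hβ : ∀ k, 0 ≤ β k) (hr : ∀ k, 0 ≤ r k)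
    (hrec : ∀ k : ℕ,
      y (k + 1) ^ 2 * Real.sin φ ^ 2
        ≤ 3 * y 1 ^ 2 * l ^ k
          + 3 * l ^ 2 * (∑ s ∈ Finset.Icc 1 k, β s * Real.sqrt l ^ (k - s)) ^ 2
          + 3 * (∑ s ∈ Finset.Icc 1 k, r s * Real.sqrt l ^ (k - s)) ^ 2)
    (K : ℕ) :
    ∑ k ∈ Finset.Icc 1 K, y k ^ 2
      ≤ C₁ * y 1 ^ 2 + C₂ * ∑ k ∈ Finset.Icc 1 (K - 1), β k ^ 2
        + C₃ * ∑ k ∈ Finset.Icc 1 (K - 1), r k ^ 2 := by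
  set q := Real.sqrt l with hqdef
  have hq0 : 0 ≤ q := Real.sqrt_nonneg l
  have hq1 : q < 1 := by
    have := Real.sqrt_lt_sqrt hl hl1
    rwa [Real.sqrt_one] at this
  have hql : q ^ 2 = l := Real.sq_sqrt hl
  have h1l : (0:ℝ) < 1 - l := by linarith
  have h1q : (0:ℝ) < 1 - q := by linarith
  have hsin : Real.sin φ ^ 2 = 1 - l := by
    rw [hφ, Real.sin_sq, Real.cos_arccos (by linarith) hq1.le, hql]
  -- trivial case K = 0
  rcases Nat.eq_zero_or_pos K with hK | hK
  · subst hK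
    simp only [Nat.zero_sub, Finset.Icc_self, show Finset.Icc 1 0 = (∅ : Finset ℕ) by
      apply Finset.Icc_eq_empty; omega, Finset.sum_empty, mul_zero, add_zero]
    rw [hC₁]
    positivity
  obtain ⟨M, rfl⟩ : ∃ M, K = M + 1 := ⟨K - 1, by omega⟩
  have hM1 : M + 1 - 1 = M := by omega
  rw [hM1]
  -- split off the first term
  have hsplit : ∑ k ∈ Finset.Icc 1 (M + 1), y k ^ 2
      = y 1 ^ 2 + ∑ j ∈ Finset.Icc 1 M, y (j + 1) ^ 2 := by
    have h1 : Finset.Icc 1 (M + 1) = insert 1 (Finset.Icc 2 (M + 1)) := by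
      ext x; simp only [Finset.mem_Icc, Finset.mem_insert]; omega
    rw [h1, Finset.sum_insert (by simp [Finset.mem_Icc])]
    congr 1
    rw [← Finset.Ico_add_one_right_eq_Icc, ← Finset.Ico_add_one_right_eq_Icc, Finset.sum_Ico_eq_sum_range,
      Finset.sum_Ico_eq_sum_range]
    apply Finset.sum_congr (by congr 1 <;> omega)
    intro i _
    congr 2
    omega
  rw [hsplit]
  set Sβ := ∑ k ∈ Finset.Icc 1 M, β k ^ 2 with hSβ
  set Sr := ∑ k ∈ Finset.Icc 1 M, r k ^ 2 with hSr
  set P := ∑ j ∈ Finset.Icc 1 M, y (j + 1) ^ 2 with hP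
  have hSβ0 : 0 ≤ Sβ := Finset.sum_nonneg fun i _ => sq_nonneg _
  have hSr0 : 0 ≤ Sr := Finset.sum_nonneg fun i _ => sq_nonneg _
  -- geometric sum of l^j
  have hgeom : ∑ j ∈ Finset.Icc 1 M, l ^ j ≤ l * (1 / (1 - l)) := by
    have e : ∀ j ∈ Finset.Icc 1 M, l ^ j = l * l ^ (j - 1) := by
      intro j hj
      simp only [Finset.mem_Icc] at hj
      rw [← pow_succ']
      congr 1
      omega
    rw [Finset.sum_congr rfl e, ← Finset.mul_sum]
    exact mul_le_mul_of_nonneg_left (aux_geomIcc l hl hl1 1 M) hl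
  have hconvβ := aux_conv q hq0 hq1 β M
  have hconvr := aux_conv q hq0 hq1 r M
  -- sum the recursion
  have hsum : P * (1 - l)
      ≤ 3 * y 1 ^ 2 * (∑ j ∈ Finset.Icc 1 M, l ^ j)
        + 3 * l ^ 2 * (∑ j ∈ Finset.Icc 1 M, (∑ s ∈ Finset.Icc 1 j, β s * q ^ (j - s)) ^ 2)
        + 3 * (∑ j ∈ Finset.Icc 1 M, (∑ s ∈ Finset.Icc 1 j, r s * q ^ (j - s)) ^ 2) := by
    rw [hP, Finset.sum_mul]
    calc ∑ j ∈ Finset.Icc 1 M, y (j + 1) ^ 2 * (1 - l)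
        ≤ ∑ j ∈ Finset.Icc 1 M,
            (3 * y 1 ^ 2 * l ^ j
              + 3 * l ^ 2 * (∑ s ∈ Finset.Icc 1 j, β s * q ^ (j - s)) ^ 2
              + 3 * (∑ s ∈ Finset.Icc 1 j, r s * q ^ (j - s)) ^ 2) := by
          refine Finset.sum_le_sum fun j _ => ?_
          have h := hrec j
          rwa [hsin] at h
      _ = _ := by
          rw [Finset.sum_add_distrib, Finset.sum_add_distrib, ← Finset.mul_sum,
            ← Finset.mul_sum, ← Finset.mul_sum]
  -- combine bounds
  have hP2 : P * (1 - l)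
      ≤ 3 * y 1 ^ 2 * (l * (1 / (1 - l)))
        + 3 * l ^ 2 * ((1 / (1 - q)) ^ 2 * Sβ)
        + 3 * ((1 / (1 - q)) ^ 2 * Sr) := by
    refine hsum.trans ?_
    gcongr <;> positivity
  rw [hC₁, hC₂, hC₃]
  have key : y 1 ^ 2 + 3 * l / (1 - l) ^ 2 * y 1 ^ 2 ≤ 3 / (1 - l) ^ 2 * y 1 ^ 2 := by
    have h3 : 0 ≤ (3 / (1 - l) ^ 2 - 3 * l / (1 - l) ^ 2 - 1) := by
      have e : 3 / (1 - l) ^ 2 - 3 * l / (1 - l) ^ 2 - 1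
          = (3 - 3 * l - (1 - l) ^ 2) / (1 - l) ^ 2 := by
        field_simp
      rw [e]
      apply div_nonneg (by nlinarith) (sq_nonneg _)
    nlinarith [mul_nonneg h3 (sq_nonneg (y 1))]
  have hPfin : P ≤ 3 * l / (1 - l) ^ 2 * y 1 ^ 2
      + 3 * l ^ 2 / ((1 - q) ^ 2 * (1 - l)) * Sβ
      + 3 / ((1 - q) ^ 2 * (1 - l)) * Sr := by
    rw [← le_div_iff₀ h1l] at hP2
    exact hP2.trans (le_of_eq (aux_alg l q (y 1 ^ 2) Sβ Sr h1l.ne' h1q.ne'))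
  linarith
end
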